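/- arXiv:1809.09857 — 2 statements merged into one kernel-verified Lean document; each statement's English description precedes it below -/
import Mathlib

section
/- For words v with max(v) ≤ m and w with max(w) ≤ n, the convolution product [v,m] * [w,n] := ⧢ ∘ ([v,m] ⊗ [w,n]) ∘ Δ in End of the shuffle bialgebra equals [v ⧢ (w↑m), m+n], where Δ is the deconcatenation coproduct and the bracket is extended linearly over the formal sum v ⧢ (w↑m). -/
/-- The word determined by a shuffle pattern `I ⊆ {1, ..., m+n}`: positions in `I`
receive the letters of `u` in order, positions outside `I` receive the letters of
`v` in order; i.e. the unique word `w` with `w|_I = u` and `w|_{Iᶜ} = v`. -/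
def shuffleWord (u v : List ℕ) (I : Finset (Fin (u.length + v.length))) : List ℕ :=
  (List.finRange (u.length + v.length)).map fun p =>
    if p ∈ I then u.getD (I.filter fun q => q < p).card 0
    else v.getD ((Iᶜ : Finset (Fin (u.length + v.length))).filter fun q => q < p).card 0

/-- The shuffle product `u ⧢ v` of two words, as an element of the free `ℤ`-module
on words: the sum, over all `|u|`-element subsets `I` of `{1, ..., |u|+|v|}`, of the
word `w` with `w|_I = u` and `w|_{Iᶜ} = v`. -/
noncomputable def shuffle (u v : List ℕ) : List ℕ →₀ ℤ :=
  ∑ I ∈ Finset.univ.filter fun I : Finset (Fin (u.length + v.length)) => I.card = u.length,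
    Finsupp.single (shuffleWord u v I) 1

/-- Composition of words: `v ∘ w = v_{w₁} v_{w₂} ⋯ v_{w_m}`, where words are
`1`-indexed. -/
def composeWord (v w : List ℕ) : List ℕ := w.map fun i => v.getD (i - 1) 0

/-- The endomorphism `[w, n]` of the free module on words: it sends a basis word `v`
of length `n` to `v ∘ w`, and every other basis word to `0`. -/
noncomputable def wordOp (w : List ℕ) (n : ℕ) : (List ℕ →₀ ℤ) →ₗ[ℤ] (List ℕ →₀ ℤ) :=
  Finsupp.lsum ℤ fun v => if v.length = n then Finsupp.lsingle (composeWord v w) else 0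

/-- The bilinear extension of the shuffle product to the free module on words. -/
noncomputable def shuffleF (x y : List ℕ →₀ ℤ) : List ℕ →₀ ℤ :=
  x.sum fun u c => y.sum fun v d => (c * d) • shuffle u v

/-- The convolution product `f * g = ⧢ ∘ (f ⊗ g) ∘ Δ` of endomorphisms of the
shuffle bialgebra, where `Δ` is the deconcatenation coproduct. -/
noncomputable def conv (f g : (List ℕ →₀ ℤ) →ₗ[ℤ] (List ℕ →₀ ℤ)) :
    (List ℕ →₀ ℤ) →ₗ[ℤ] (List ℕ →₀ ℤ) :=
  Finsupp.lsum ℤ fun x => LinearMap.toSpanSingleton ℤ _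
    (∑ i ∈ Finset.range (x.length + 1),
      shuffleF (f (Finsupp.single (x.take i) 1)) (g (Finsupp.single (x.drop i) 1)))

lemma length_composeWord (v w : List ℕ) : (composeWord v w).length = w.length :=
  List.length_map _

lemma length_shuffleWord (u v : List ℕ) (I : Finset (Fin (u.length + v.length))) :
    (shuffleWord u v I).length = u.length + v.length := by simp [shuffleWord]

lemma getD_take (x : List ℕ) (m k : ℕ) (hk : k < m) : (x.take m).getD k 0 = x.getD k 0 := by
  simp [List.getD_eq_getElem?_getD, List.getElem?_take, hk]

lemma getD_drop (x : List ℕ) (m k : ℕ) : (x.drop m).getD k 0 = x.getD (m+k) 0 := by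
  simp [List.getD_eq_getElem?_getD, List.getElem?_drop]

lemma getD_lt (x : List ℕ) (k : ℕ) (h : k < x.length) : x.getD k 0 = x[k] := by
  simp [List.getD_eq_getElem?_getD, List.getElem?_eq_getElem h]

lemma filter_lt_card_lt {N : ℕ} (I : Finset (Fin N)) (p : Fin N) (hp : p ∈ I) :
    (I.filter fun q => q < p).card < I.card := by
  refine Finset.card_lt_card ?_
  refine (Finset.ssubset_iff_of_subset (Finset.filter_subset _ _)).mpr ⟨p, hp, by simp⟩

lemma getD_map (f : ℕ → ℕ) (l : List ℕ) (k : ℕ) (hk : k < l.length) :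
    (l.map f).getD k 0 = f l[k] := by
  simp [List.getD_eq_getElem?_getD, List.getElem?_map, List.getElem?_eq_getElem hk]

lemma mem_map_finCongr {N N' : ℕ} (h : N = N') (I : Finset (Fin N)) (p : Fin N') :
    p ∈ I.map (finCongr h).toEmbedding ↔ Fin.cast h.symm p ∈ I := by
  rw [Finset.mem_map_equiv]; simp

lemma card_filter_lt_map {N N' : ℕ} (h : N = N') (I : Finset (Fin N)) (p : Fin N') :
    ((I.map (finCongr h).toEmbedding).filter fun q => q < p).card
      = (I.filter fun q => q < Fin.cast h.symm p).card := by
  rw [Finset.filter_map, Finset.card_map]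
  congr 1

lemma map_compl_equiv {N N' : ℕ} (e : Fin N ≃ Fin N') (I : Finset (Fin N)) :
    (I.map e.toEmbedding)ᶜ = Iᶜ.map e.toEmbedding := by
  ext q; simp [Finset.mem_map_equiv]

lemma compose_shuffleWord (x v w : List ℕ) (m : ℕ)
    (hv : ∀ c ∈ v, 1 ≤ c ∧ c ≤ m) (hw : ∀ c ∈ w, 1 ≤ c)
    (I : Finset (Fin (v.length + (w.map (· + m)).length)))
    (hI : I.card = v.length)
    (h : (composeWord (x.take m) v).length + (composeWord (x.drop m) w).length
        = v.length + (w.map (· + m)).length) :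
    shuffleWord (composeWord (x.take m) v) (composeWord (x.drop m) w)
      (I.map (finCongr h.symm).toEmbedding)
    = composeWord x (shuffleWord v (w.map (· + m)) I) := by
  apply List.ext_getElem
  · simp [length_shuffleWord, composeWord, shuffleWord]
  · intro i h1 h2
    have hiN : i < v.length + (w.map (· + m)).length := by
      simpa [length_shuffleWord, length_composeWord, composeWord] using h2
    simp only [shuffleWord, List.getElem_map, List.getElem_finRange, Fin.cast_mk,
      mem_map_finCongr, card_filter_lt_map, map_compl_equiv]
    simp only [composeWord, List.getElem_map, List.getElem_finRange, Fin.cast_mk,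
      mem_map_finCongr, card_filter_lt_map, map_compl_equiv]
    by_cases hp : (⟨i, hiN⟩ : Fin (v.length + (w.map (· + m)).length)) ∈ I
    · rw [if_pos hp, if_pos hp]
      have hc : (I.filter fun q => q < (⟨i, hiN⟩ : Fin _)).card < v.length := by
        have := filter_lt_card_lt I _ hp; omega
      rw [getD_map _ _ _ hc, getD_lt v _ hc]
      obtain ⟨ha, hb⟩ := hv _ (List.getElem_mem hc)
      exact getD_take x m _ (by omega)
    · rw [if_neg hp, if_neg hp]
      have hp' : (⟨i, hiN⟩ : Fin _) ∈ Iᶜ := Finset.mem_compl.mpr hp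
      have hc : (Iᶜ.filter fun q => q < (⟨i, hiN⟩ : Fin _)).card < w.length := by
        have h1 := filter_lt_card_lt Iᶜ _ hp'
        have h2 : Iᶜ.card = (v.length + (w.map (· + m)).length) - I.card := by
          simp [Finset.card_compl]
        simp only [List.length_map] at h2
        omega
      have hc2 : (Iᶜ.filter fun q => q < (⟨i, hiN⟩ : Fin _)).card < (w.map (· + m)).length := by
        simpa using hc
      rw [getD_map _ _ _ hc, getD_map _ _ _ hc, getD_drop]
      have h1 := hw _ (List.getElem_mem hc)
      congr 1
      omega

lemma wordOp_single (z : List ℕ) (k : ℕ) (u : List ℕ) :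
    wordOp z k (Finsupp.single u 1)
      = if u.length = k then Finsupp.single (composeWord u z) 1 else 0 := by
  simp only [wordOp, Finsupp.lsum_single]
  split <;> simp

lemma shuffleF_zero_left (y : List ℕ →₀ ℤ) : shuffleF 0 y = 0 := by simp [shuffleF]

lemma shuffleF_zero_right (x : List ℕ →₀ ℤ) : shuffleF x 0 = 0 := by simp [shuffleF]

lemma shuffleF_single (u v : List ℕ) :
    shuffleF (Finsupp.single u 1) (Finsupp.single v 1) = shuffle u v := by
  simp [shuffleF, Finsupp.sum_single_index]

lemma sum_wordOp_apply (s : List ℕ →₀ ℤ) (k : ℕ) :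
    (s.sum fun z c => c • wordOp z k)
      = Finsupp.lsum ℤ (fun z => LinearMap.toSpanSingleton ℤ _ (wordOp z k)) s := by
  rw [Finsupp.lsum_apply]
  apply Finsupp.sum_congr
  intro z _
  rw [LinearMap.toSpanSingleton_apply]


/-- For words `v` with `max v ≤ m` and `w` with `max w ≤ n`, the convolution product
`[v, m] * [w, n]` equals `[v ⧢ (w↑m), m+n]`, the bracket extended linearly over the
formal sum `v ⧢ (w↑m)`. -/
theorem conv_wordOp (v w : List ℕ) (m n : ℕ)
    (hv : ∀ a ∈ v, 1 ≤ a ∧ a ≤ m) (hw : ∀ a ∈ w, 1 ≤ a ∧ a ≤ n) :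
    conv (wordOp v m) (wordOp w n) =
      (shuffle v (w.map (· + m))).sum fun z c => c • wordOp z (m + n) := by
  rw [sum_wordOp_apply, shuffle, map_sum]
  have hRHS : ∀ I ∈ (Finset.univ.filter fun I :
        Finset (Fin (v.length + (w.map (· + m)).length)) => I.card = v.length),
      (Finsupp.lsum ℤ (fun z => LinearMap.toSpanSingleton ℤ _ (wordOp z (m+n))))
        (Finsupp.single (shuffleWord v (w.map (· + m)) I) 1)
        = wordOp (shuffleWord v (w.map (· + m)) I) (m+n) := by
    intro I _
    simp [Finsupp.lsum_single, LinearMap.toSpanSingleton_apply]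
  rw [Finset.sum_congr rfl hRHS]
  apply Finsupp.lhom_ext'
  intro x
  apply LinearMap.ext_ring
  simp only [LinearMap.comp_apply, Finsupp.lsingle_apply, LinearMap.sum_apply]
  rw [conv, Finsupp.lsum_single, LinearMap.toSpanSingleton_apply, one_smul]
  by_cases hx : x.length = m + n
  · have hm : m ∈ Finset.range (x.length + 1) := by
      rw [Finset.mem_range]; omega
    rw [Finset.sum_eq_single_of_mem m hm ?side]
    case side =>
      intro i hi hne
      rw [Finset.mem_range] at hi
      rw [wordOp_single]
      rw [if_neg (by rw [List.length_take]; omega)]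
      exact shuffleF_zero_left _
    rw [wordOp_single, wordOp_single, if_pos (by rw [List.length_take]; omega),
      if_pos (by rw [List.length_drop]; omega), shuffleF_single]
    have hcong : ∀ I ∈ (Finset.univ.filter fun I :
          Finset (Fin (v.length + (w.map (· + m)).length)) => I.card = v.length),
        wordOp (shuffleWord v (w.map (· + m)) I) (m + n) (Finsupp.single x 1)
          = Finsupp.single (composeWord x (shuffleWord v (w.map (· + m)) I)) 1 := by
      intro I _
      rw [wordOp_single, if_pos hx]
    rw [Finset.sum_congr rfl hcong]
    have h : (composeWord (x.take m) v).length + (composeWord (x.drop m) w).length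
        = v.length + (w.map (· + m)).length := by
      simp [length_composeWord]
    rw [shuffle]
    refine Finset.sum_nbij' (fun J => J.map (finCongr h).toEmbedding)
      (fun I => I.map (finCongr h.symm).toEmbedding) ?_ ?_ ?_ ?_ ?_
    · intro J hJ
      simp only [Finset.mem_filter, Finset.mem_univ, true_and, Finset.card_map] at hJ ⊢
      rw [hJ, length_composeWord]
    · intro I hI
      simp only [Finset.mem_filter, Finset.mem_univ, true_and, Finset.card_map] at hI ⊢
      rw [hI, length_composeWord]
    · intro J _
      ext q
      simp [Finset.mem_map_equiv]
    · intro I _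
      ext q
      simp [Finset.mem_map_equiv]
    · intro J hJ
      simp only [Finset.mem_filter, Finset.mem_univ, true_and] at hJ
      congr 1
      rw [← compose_shuffleWord x v w m hv (fun c hc => (hw c hc).1) _ (by simp [Finset.card_map, hJ, length_composeWord]) h]
      congr 1
      ext q
      simp [Finset.mem_map_equiv]
  · rw [Finset.sum_eq_zero, Finset.sum_eq_zero]
    · intro I _
      rw [wordOp_single, if_neg hx]
    · intro i hi
      rw [Finset.mem_range] at hi
      rw [wordOp_single, wordOp_single]
      by_cases h1 : (x.take i).length = m
      · rw [if_pos h1, if_neg (by rw [List.length_drop]; rw [List.length_take] at h1; omega)]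
        exact shuffleF_zero_right _
      · rw [if_neg h1]
        exact shuffleF_zero_left _
end

section
/- A permutation π ∈ S_n satisfies 'π_i = i−1 whenever π_i < i' if and only if π has a strictly decreasing reduced word. -/
/-- The simple transposition `s_i = (i, i+1)`, acting on `ℕ`; the symmetric groups
`S_n` embed as permutations of `ℕ` fixing `0` and all sufficiently large integers,
with generators `s_1, ..., s_{n-1}`. -/
def simpleRefl (i : ℕ) : Equiv.Perm ℕ := Equiv.swap i (i + 1)

/-- The product `s_{i₁} s_{i₂} ⋯ s_{i_l}` associated to a word `i₁ i₂ ⋯ i_l`. -/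
def wordProd (w : List ℕ) : Equiv.Perm ℕ := (w.map simpleRefl).prod

/-- A word (over the positive integers) is reduced if it has minimal length among
all words over the positive integers with the same product of simple
transpositions. -/
def IsReducedWord (w : List ℕ) : Prop :=
  (∀ i ∈ w, 1 ≤ i) ∧
    ∀ w' : List ℕ, (∀ i ∈ w', 1 ≤ i) → wordProd w' = wordProd w → w.length ≤ w'.length

/-- `Red π` is the set `R(π)` of reduced words for the permutation `π`. -/
def Red (π : Equiv.Perm ℕ) : Set (List ℕ) := {w | IsReducedWord w ∧ wordProd w = π}

lemma wordProd_nil : wordProd [] = 1 := rfl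

lemma wordProd_cons (a : ℕ) (w : List ℕ) :
    wordProd (a :: w) = simpleRefl a * wordProd w := by
  simp [wordProd]

lemma simpleRefl_apply_of_gt {a j : ℕ} (h : a + 1 < j) : simpleRefl a j = j := by
  unfold simpleRefl
  rw [Equiv.swap_apply_of_ne_of_ne] <;> omega

lemma wordProd_fix {w : List ℕ} {j : ℕ} (h : ∀ i ∈ w, i + 1 < j) : wordProd w j = j := by
  induction w with
  | nil => rfl
  | cons a w ih =>
    rw [wordProd_cons, Equiv.Perm.mul_apply, ih fun i hi => h i (List.mem_cons_of_mem _ hi),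
      simpleRefl_apply_of_gt (h a (List.mem_cons_self))]

lemma perm_pres {ρ : Equiv.Perm ℕ} {N : ℕ} (h : ∀ j, N ≤ j → ρ j = j) {i : ℕ}
    (hi : i < N) : ρ i < N := by
  by_contra hc
  push_neg at hc
  have h2 : ρ (ρ i) = ρ i := h _ hc
  have := ρ.injective h2
  omega

lemma inv_fix {ρ : Equiv.Perm ℕ} {N : ℕ} (h : ∀ j, N ≤ j → ρ j = j) :
    ∀ j, N ≤ j → ρ⁻¹ j = j := by
  intro j hj
  conv_lhs => rw [← h j hj]
  exact ρ.symm_apply_apply j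

lemma swap_lt_iff {a x y : ℕ} (hxy : x ≠ y) :
    Equiv.swap a (a + 1) x < Equiv.swap a (a + 1) y ↔
      if (x = a ∧ y = a + 1) ∨ (x = a + 1 ∧ y = a) then y < x else x < y := by
  simp only [Equiv.swap_apply_def]
  split_ifs <;> omega

lemma chain'_gt_mem {a : ℕ} {w : List ℕ} (h : List.Chain' (· > ·) (a :: w)) :
    ∀ i ∈ w, i < a := by
  dsimp only [List.Chain'] at h; rw [List.isChain_iff_pairwise] at h
  exact fun i hi => (List.pairwise_cons.mp h).1 i hi

/-! ### Inversions -/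

def InvSet (π : Equiv.Perm ℕ) (N : ℕ) : Finset (ℕ × ℕ) :=
  (Finset.range N ×ˢ Finset.range N).filter fun p => p.1 < p.2 ∧ π p.2 < π p.1

lemma mem_InvSet {π : Equiv.Perm ℕ} {N : ℕ} {p : ℕ × ℕ} :
    p ∈ InvSet π N ↔ p.1 < N ∧ p.2 < N ∧ p.1 < p.2 ∧ π p.2 < π p.1 := by
  simp [InvSet, Finset.mem_filter, Finset.mem_product, and_assoc]

lemma InvSet_one (N : ℕ) : InvSet 1 N = ∅ := by
  ext p
  simp only [mem_InvSet, Equiv.Perm.one_apply, Finset.notMem_empty, iff_false]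
  omega

lemma invSet_swap_eq {ρ : Equiv.Perm ℕ} {a N : ℕ} (haN : a + 1 < N)
    (hfix : ∀ j, N ≤ j → ρ j = j) (hlt : ρ⁻¹ a < ρ⁻¹ (a + 1)) :
    InvSet (simpleRefl a * ρ) N = insert (ρ⁻¹ a, ρ⁻¹ (a + 1)) (InvSet ρ N) := by
  have hu : ρ (ρ⁻¹ a) = a := ρ.apply_symm_apply a
  have hv : ρ (ρ⁻¹ (a + 1)) = a + 1 := ρ.apply_symm_apply (a + 1)
  have huN : ρ⁻¹ a < N := perm_pres (inv_fix hfix) (by omega)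
  have hvN : ρ⁻¹ (a + 1) < N := perm_pres (inv_fix hfix) haN
  ext ⟨p1, p2⟩
  simp only [mem_InvSet, Finset.mem_insert, Equiv.Perm.mul_apply, simpleRefl, Prod.mk.injEq]
  constructor
  · rintro ⟨h1, h2, h3, h4⟩
    have hxy : ρ p2 ≠ ρ p1 := fun h => by have := ρ.injective h; omega
    rw [swap_lt_iff hxy] at h4
    split_ifs at h4 with hC
    · rcases hC with ⟨e1, e2⟩ | ⟨e1, e2⟩
      · exfalso
        have hp2 : p2 = ρ⁻¹ a := by rw [← e1, Equiv.Perm.inv_def, ρ.symm_apply_apply]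
        have hp1 : p1 = ρ⁻¹ (a + 1) := by rw [← e2, Equiv.Perm.inv_def, ρ.symm_apply_apply]
        omega
      · left
        constructor
        · rw [← e2, Equiv.Perm.inv_def, ρ.symm_apply_apply]
        · rw [← e1, Equiv.Perm.inv_def, ρ.symm_apply_apply]
    · right; exact ⟨h1, h2, h3, h4⟩
  · rintro (⟨e1, e2⟩ | ⟨h1, h2, h3, h4⟩)
    · subst e1; subst e2
      refine ⟨huN, hvN, hlt, ?_⟩
      rw [hu, hv, Equiv.swap_apply_left, Equiv.swap_apply_right]
      omega
    · refine ⟨h1, h2, h3, ?_⟩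
      have hxy : ρ p2 ≠ ρ p1 := by omega
      rw [swap_lt_iff hxy, if_neg]
      · exact h4
      · rintro (⟨e1, e2⟩ | ⟨e1, e2⟩)
        · have hp2 : p2 = ρ⁻¹ a := by rw [← e1, Equiv.Perm.inv_def, ρ.symm_apply_apply]
          have hp1 : p1 = ρ⁻¹ (a + 1) := by rw [← e2, Equiv.Perm.inv_def, ρ.symm_apply_apply]
          omega
        · omega

lemma pair_not_mem {ρ : Equiv.Perm ℕ} {a N : ℕ} :
    (ρ⁻¹ a, ρ⁻¹ (a + 1)) ∉ InvSet ρ N := by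
  simp only [mem_InvSet, Equiv.Perm.coe_inv, Equiv.apply_symm_apply]
  omega

lemma invSet_card_swap_eq {ρ : Equiv.Perm ℕ} {a N : ℕ} (haN : a + 1 < N)
    (hfix : ∀ j, N ≤ j → ρ j = j) (hlt : ρ⁻¹ a < ρ⁻¹ (a + 1)) :
    (InvSet (simpleRefl a * ρ) N).card = (InvSet ρ N).card + 1 := by
  rw [invSet_swap_eq haN hfix hlt, Finset.card_insert_of_notMem pair_not_mem]

lemma invSet_card_swap_le {ρ : Equiv.Perm ℕ} {a N : ℕ} (haN : a + 1 < N)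
    (hfix : ∀ j, N ≤ j → ρ j = j) :
    (InvSet (simpleRefl a * ρ) N).card ≤ (InvSet ρ N).card + 1 := by
  rcases lt_or_ge (ρ⁻¹ a) (ρ⁻¹ (a + 1)) with h | h
  · rw [invSet_swap_eq haN hfix h]
    exact le_trans (Finset.card_insert_le _ _) (by omega)
  · have hne : ρ⁻¹ (a + 1) < ρ⁻¹ a := by
      have : ρ⁻¹ (a + 1) ≠ ρ⁻¹ a := fun e => by have := ρ⁻¹.injective e; omega
      omega
    have hu : ρ (ρ⁻¹ a) = a := ρ.apply_symm_apply a
    have hv : ρ (ρ⁻¹ (a + 1)) = a + 1 := ρ.apply_symm_apply (a + 1)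
    have heq : InvSet (simpleRefl a * ρ) N = (InvSet ρ N).erase (ρ⁻¹ (a + 1), ρ⁻¹ a) := by
      ext ⟨p1, p2⟩
      simp only [mem_InvSet, Finset.mem_erase, Equiv.Perm.mul_apply, simpleRefl,
        Prod.mk.injEq, ne_eq]
      constructor
      · rintro ⟨h1, h2, h3, h4⟩
        have hxy : ρ p2 ≠ ρ p1 := fun hh => by have := ρ.injective hh; omega
        rw [swap_lt_iff hxy] at h4
        split_ifs at h4 with hC
        · exfalso
          rcases hC with ⟨e1, e2⟩ | ⟨e1, e2⟩
          · omega
          · have hp2 : p2 = ρ⁻¹ (a + 1) := by rw [← e1, Equiv.Perm.inv_def, ρ.symm_apply_apply]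
            have hp1 : p1 = ρ⁻¹ a := by rw [← e2, Equiv.Perm.inv_def, ρ.symm_apply_apply]
            omega
        · refine ⟨?_, h1, h2, h3, h4⟩
          rintro ⟨e1, e2⟩
          exact hC (Or.inl ⟨by rw [e2]; exact hu, by rw [e1]; exact hv⟩)
      · rintro ⟨hne', h1, h2, h3, h4⟩
        refine ⟨h1, h2, h3, ?_⟩
        have hxy : ρ p2 ≠ ρ p1 := by omega
        rw [swap_lt_iff hxy, if_neg]
        · exact h4
        · rintro (⟨e1, e2⟩ | ⟨e1, e2⟩)
          · exact hne' ⟨by rw [← e2, Equiv.Perm.inv_def, ρ.symm_apply_apply], by rw [← e1, Equiv.Perm.inv_def, ρ.symm_apply_apply]⟩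
          · omega
    rw [heq]
    exact le_trans (Finset.card_erase_le) (by omega)

lemma inv_le_length {N : ℕ} : ∀ w : List ℕ, (∀ i ∈ w, i + 1 < N) →
    (InvSet (wordProd w) N).card ≤ w.length := by
  intro w
  induction w with
  | nil => intro _; rw [wordProd_nil, InvSet_one]; simp
  | cons a w ih =>
    intro hb
    have hfix : ∀ j, N ≤ j → wordProd w j = j := fun j hj =>
      wordProd_fix fun i hi => by have := hb i (List.mem_cons_of_mem _ hi); omega
    rw [wordProd_cons]
    calc (InvSet (simpleRefl a * wordProd w) N).card
        ≤ (InvSet (wordProd w) N).card + 1 :=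
          invSet_card_swap_le (hb a (List.mem_cons_self)) hfix
      _ ≤ w.length + 1 := by
          have := ih fun i hi => hb i (List.mem_cons_of_mem _ hi); omega
      _ = (a :: w).length := by simp

lemma inv_eq_length {N : ℕ} : ∀ w : List ℕ, List.Chain' (· > ·) w →
    (∀ i ∈ w, 1 ≤ i ∧ i + 1 < N) → (InvSet (wordProd w) N).card = w.length := by
  intro w
  induction w with
  | nil => intro _ _; rw [wordProd_nil, InvSet_one]; simp
  | cons a w ih =>
    intro hch hb
    have htail := chain'_gt_mem hch
    have hfixa : ∀ j, a + 1 ≤ j → wordProd w j = j := fun j hj =>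
      wordProd_fix fun i hi => by have := htail i hi; omega
    have hfixN : ∀ j, N ≤ j → wordProd w j = j := fun j hj =>
      wordProd_fix fun i hi => by
        have := (hb i (List.mem_cons_of_mem _ hi)).2; omega
    have hltinv : (wordProd w)⁻¹ a < (wordProd w)⁻¹ (a + 1) := by
      have h1 : (wordProd w)⁻¹ (a + 1) = a + 1 := inv_fix hfixa (a + 1) le_rfl
      have h2 : (wordProd w)⁻¹ a < a + 1 := perm_pres (inv_fix hfixa) (by omega)
      omega
    rw [wordProd_cons,
      invSet_card_swap_eq (hb a (List.mem_cons_self)).2 hfixN hltinv,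
      ih hch.tail fun i hi => hb i (List.mem_cons_of_mem _ hi)]
    simp

/-! ### Construction of the decreasing word -/

lemma build : ∀ n : ℕ, ∀ π : Equiv.Perm ℕ, (∀ j, n ≤ j → π j = j) → π 0 = 0 →
    (∀ i, 1 ≤ i → π i < i → π i = i - 1) →
    ∃ w : List ℕ, List.Chain' (· > ·) w ∧ (∀ i ∈ w, 1 ≤ i ∧ i + 1 < n) ∧
      wordProd w = π := by
  intro n
  induction n with
  | zero =>
    intro π hfix h0 hc
    refine ⟨[], List.isChain_nil, by simp, ?_⟩
    rw [wordProd_nil]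
    ext j
    simp only [Equiv.Perm.one_apply]
    exact (hfix j (Nat.zero_le j)).symm
  | succ n ih =>
    intro π hfix h0 hc
    by_cases hn : π n = n
    · have hfix' : ∀ j, n ≤ j → π j = j := by
        intro j hj
        rcases Nat.eq_or_lt_of_le hj with h | h
        · rw [← h]; exact hn
        · exact hfix j h
      obtain ⟨w, hch, hb, hp⟩ := ih π hfix' h0 hc
      exact ⟨w, hch, fun i hi => ⟨(hb i hi).1, by have := (hb i hi).2; omega⟩, hp⟩
    · have hn1 : 1 ≤ n := by
        rcases Nat.eq_zero_or_pos n with h | h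
        · exfalso; apply hn; rw [h]; exact h0
        · exact h
      have hlt : π n < n := by
        rcases lt_trichotomy (π n) n with h | h | h
        · exact h
        · exact absurd h hn
        · exfalso
          have h2 : π (π n) = π n := hfix _ (by omega)
          have := π.injective h2
          omega
      have hpn : π n = n - 1 := hc n hn1 hlt
      have hn2 : 2 ≤ n := by
        by_contra hcon
        have hne1 : n = 1 := by omega
        rw [hne1] at hpn
        simp only [Nat.sub_self] at hpn
        have := π.injective (hpn.trans h0.symm)
        omega
      set π' := simpleRefl (n - 1) * π with hπ'
      have key : simpleRefl (n - 1) (n - 1) = n := by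
        unfold simpleRefl; rw [Equiv.swap_apply_left]; omega
      have hfix'' : ∀ j, n ≤ j → π' j = j := by
        intro j hj
        rcases Nat.eq_or_lt_of_le hj with h | h
        · rw [hπ', Equiv.Perm.mul_apply, ← h, hpn, key]
        · rw [hπ', Equiv.Perm.mul_apply, hfix j h, simpleRefl_apply_of_gt (by omega)]
      have h0' : π' 0 = 0 := by
        rw [hπ', Equiv.Perm.mul_apply, h0]
        unfold simpleRefl
        rw [Equiv.swap_apply_of_ne_of_ne] <;> omega
      have hc' : ∀ i, 1 ≤ i → π' i < i → π' i = i - 1 := by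
        intro i h1 hlt'
        by_cases e1 : π i = n - 1
        · have hin : i = n := π.injective (e1.trans hpn.symm)
          subst hin
          have := hfix'' i le_rfl
          omega
        · by_cases e2 : π i = n
          · have hiln : i < n := by
              rcases lt_trichotomy i n with h | h | h
              · exact h
              · exfalso; rw [h] at e2; omega
              · exfalso; have := hfix i (by omega); omega
            have hpi : π' i = n - 1 := by
              rw [hπ', Equiv.Perm.mul_apply, e2]
              unfold simpleRefl
              rw [Equiv.swap_apply_def]
              split_ifs <;> omega
            omega
          · have heq : π' i = π i := by
              rw [hπ', Equiv.Perm.mul_apply]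
              unfold simpleRefl
              rw [Equiv.swap_apply_of_ne_of_ne e1 (by omega)]
            rw [heq] at hlt' ⊢
            exact hc i h1 hlt'
      obtain ⟨w, hch, hb, hp⟩ := ih π' hfix'' h0' hc'
      refine ⟨(n - 1) :: w, ?_, ?_, ?_⟩
      · dsimp only [List.Chain']; rw [List.isChain_cons]
        refine ⟨fun y hy => ?_, hch⟩
        have := (hb y (List.mem_of_mem_head? hy)).2
        show y < n - 1
        omega
      · intro i hi
        rcases List.mem_cons.mp hi with h | h
        · constructor <;> omega
        · exact ⟨(hb i h).1, by have := (hb i h).2; omega⟩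
      · rw [wordProd_cons, hp, hπ', ← mul_assoc]
        unfold simpleRefl
        rw [Equiv.swap_mul_self, one_mul]

/-! ### Decreasing words give the condition -/

lemma dec_cond : ∀ w : List ℕ, List.Chain' (· > ·) w → (∀ i ∈ w, 1 ≤ i) →
    ∀ j, 1 ≤ j → wordProd w j < j → wordProd w j = j - 1 := by
  intro w
  induction w with
  | nil =>
    intro _ _ j _ h
    rw [wordProd_nil] at h
    simp at h
  | cons a w ih =>
    intro hch hpos j hj hlt
    have htail : ∀ i ∈ w, i < a := chain'_gt_mem hch
    have hfixρ : ∀ k, a + 1 ≤ k → wordProd w k = k := fun k hk =>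
      wordProd_fix fun i hi => by have := htail i hi; omega
    have hπj : wordProd (a :: w) j = simpleRefl a (wordProd w j) := by
      rw [wordProd_cons, Equiv.Perm.mul_apply]
    rcases Nat.lt_or_ge j (a + 1) with hja | hja
    · have hρj : wordProd w j < a + 1 := perm_pres hfixρ hja
      by_cases he : wordProd w j = a
      · have : wordProd (a :: w) j = a + 1 := by
          rw [hπj, he]; unfold simpleRefl; exact Equiv.swap_apply_left _ _
        omega
      · have heq : wordProd (a :: w) j = wordProd w j := by
          rw [hπj]; unfold simpleRefl
          rw [Equiv.swap_apply_of_ne_of_ne he (by omega)]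
        rw [heq] at hlt ⊢
        exact ih hch.tail (fun i hi => hpos i (List.mem_cons_of_mem _ hi)) j hj hlt
    · rcases Nat.eq_or_lt_of_le hja with he | hgt
      · have : wordProd (a :: w) j = a := by
          rw [hπj, hfixρ j hja, ← he]
          unfold simpleRefl; exact Equiv.swap_apply_right _ _
        omega
      · have : wordProd (a :: w) j = j := by
          rw [hπj, hfixρ j hja]
          exact simpleRefl_apply_of_gt hgt
        omega

lemma le_foldr_max : ∀ (w : List ℕ), ∀ i ∈ w, i ≤ w.foldr max 0 := by
  intro w
  induction w with
  | nil => simp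
  | cons a w ih =>
    intro i hi
    rcases List.mem_cons.mp hi with h | h
    · subst h; exact le_max_left _ _
    · exact le_trans (ih i h) (le_max_right _ _)

/-- A permutation `π ∈ S_n` (a permutation of `ℕ` fixing `0` and all `i > n`)
satisfies `π i = i - 1` whenever `π i < i`, if and only if `π` has a strictly
decreasing reduced word. -/
theorem decreasing_reduced_word_iff (n : ℕ) (π : Equiv.Perm ℕ)
    (hπ : ∀ i : ℕ, i = 0 ∨ n < i → π i = i) :
    (∀ i : ℕ, 1 ≤ i → i ≤ n → π i < i → π i = i - 1) ↔
      ∃ w ∈ Red π, List.Chain' (· > ·) w := by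
  constructor
  · intro hcond
    have hfix : ∀ j, n + 1 ≤ j → π j = j := fun j hj => hπ j (Or.inr (by omega))
    have h0 : π 0 = 0 := hπ 0 (Or.inl rfl)
    have hc : ∀ i, 1 ≤ i → π i < i → π i = i - 1 := by
      intro i h1 hlt
      rcases le_or_gt i n with h | h
      · exact hcond i h1 h hlt
      · have := hπ i (Or.inr h); omega
    obtain ⟨w, hch, hb, hp⟩ := build (n + 1) π hfix h0 hc
    refine ⟨w, ⟨⟨fun i hi => (hb i hi).1, ?_⟩, hp⟩, hch⟩
    intro w' hw' hprodeq
    set N := max (n + 2) (w'.foldr max 0 + 2) with hN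
    have h1 : ∀ i ∈ w, 1 ≤ i ∧ i + 1 < N := fun i hi =>
      ⟨(hb i hi).1, by have := (hb i hi).2; omega⟩
    have h2 : ∀ i ∈ w', i + 1 < N := fun i hi => by
      have := le_foldr_max w' i hi; omega
    calc w.length = (InvSet (wordProd w) N).card := (inv_eq_length w hch h1).symm
      _ = (InvSet (wordProd w') N).card := by rw [hprodeq]
      _ ≤ w'.length := inv_le_length w' h2
  · rintro ⟨w, ⟨⟨hpos, _⟩, hprod⟩, hchain⟩ i h1 _ hlt
    have := dec_cond w hchain hpos i h1
    rw [hprod] at this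
    exact this hlt
end
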